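/- Let $A$ be an $r\times r$ real symmetric positive definite matrix with all off-diagonal entries nonpositive. Then there exists an upper-triangular matrix $B$ with all entries nonnegative such that $A = (B^T)^{-1} B^{-1}$, i.e. $A^{-1} = B B^T$. -/

import Mathlib

open Matrix

private lemma posDef_submatrix_equiv {m n : Type*} [Fintype m] [Fintype n]
    [DecidableEq m] [DecidableEq n] {M : Matrix n n ℝ} (hM : M.PosDef) (e : m ≃ n) :
    (M.submatrix e e).PosDef := by
  refine PosDef.of_dotProduct_mulVec_pos (hM.1.submatrix e) fun x hx => ?_
  have hx' : (x ∘ e.symm) ≠ 0 := by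
    intro h
    exact hx (funext fun i => by simpa using congrFun h (e i))
  have := hM.dotProduct_mulVec_pos hx'
  rw [submatrix_mulVec_equiv]
  have key : dotProduct (star x) ((M *ᵥ (x ∘ ⇑e.symm)) ∘ ⇑e)
      = dotProduct (star (x ∘ ⇑e.symm)) (M *ᵥ (x ∘ ⇑e.symm)) := by
    simp only [dotProduct, Function.comp_apply, Pi.star_apply]
    exact Fintype.sum_equiv e _ _ (fun i => by simp)
  rw [key]
  exact this

set_option maxHeartbeats 2000000 in
private lemma aux_fact : ∀ (n : ℕ) (A : Matrix (Fin n) (Fin n) ℝ), A.IsSymm → A.PosDef →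
    (∀ i j : Fin n, i ≠ j → A i j ≤ 0) →
    ∃ B : Matrix (Fin n) (Fin n) ℝ, B.BlockTriangular id ∧ (∀ i j, 0 ≤ B i j) ∧
      A⁻¹ = B * Bᵀ := by
  intro n
  induction n with
  | zero =>
    intro A _ _ _
    exact ⟨1, fun i _ _ => i.elim0, fun i => i.elim0,
      by ext i j; exact i.elim0⟩
  | succ k ih =>
    intro A hsymm hpd hoff
    -- the reindexing equivalence
    set e : (Fin 1 ⊕ Fin k) ≃ Fin (k+1) := finSumFinEquiv.trans (finCongr (Nat.add_comm 1 k))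
      with he_def
    have he1 : e (Sum.inl 0) = 0 := rfl
    have he2 : ∀ i : Fin k, e (Sum.inr i) = i.succ := by
      intro i
      ext
      simp [he_def, finSumFinEquiv]
    set a : ℝ := A 0 0 with ha_def
    have ha : 0 < a := by
      have h1 : (Pi.single 0 1 : Fin (k+1) → ℝ) ≠ 0 := by
        intro h; simpa using congrFun h 0
      have h2 := hpd.dotProduct_mulVec_pos h1
      simpa [dotProduct, mulVec, Pi.single_apply, mul_ite, Finset.sum_ite_eq,
        Finset.sum_ite_eq'] using h2
    have ha' : a ≠ 0 := ha.ne'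
    -- blocks
    set B₁ : Matrix (Fin 1) (Fin k) ℝ := Matrix.of (fun _ j => A 0 j.succ) with hB₁_def
    set D : Matrix (Fin k) (Fin k) ℝ := Matrix.of (fun i j => A i.succ j.succ) with hD_def
    set A₁ : Matrix (Fin 1) (Fin 1) ℝ := a • 1 with hA₁_def
    have hA₁mul : A₁ * (a⁻¹ • (1 : Matrix (Fin 1) (Fin 1) ℝ)) = 1 := by
      rw [hA₁_def, smul_mul_smul_comm, mul_inv_cancel₀ ha', mul_one, one_smul]
    haveI : Invertible A₁ := invertibleOfRightInverse A₁ _ hA₁mul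
    have hA₁inv : A₁⁻¹ = a⁻¹ • 1 := Matrix.inv_eq_right_inv hA₁mul
    have hA₁herm : A₁.IsHermitian := by
      simp [Matrix.IsHermitian, hA₁_def, conjTranspose_smul, conjTranspose_one]
    have hBH : B₁ᴴ = B₁ᵀ := by ext i j; simp [conjTranspose_apply]
    have hblocks : A.submatrix e e = Matrix.fromBlocks A₁ B₁ B₁ᴴ D := by
      ext i j
      rcases i with i | i <;> rcases j with j | j
      · obtain rfl : i = 0 := Subsingleton.elim i 0
        obtain rfl : j = 0 := Subsingleton.elim j 0
        simp [he1, hA₁_def, ha_def, Matrix.one_apply]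
      · obtain rfl : i = 0 := Subsingleton.elim i 0
        simp [he1, he2, hB₁_def]
      · obtain rfl : j = 0 := Subsingleton.elim j 0
        simp [he1, he2, hBH, hB₁_def]
        exact hsymm.apply 0 i.succ
      · simp [he2, hD_def]
    have hA'pd : (A.submatrix e e).PosDef := posDef_submatrix_equiv hpd e
    -- the Schur complement
    set S : Matrix (Fin k) (Fin k) ℝ := D - a⁻¹ • (B₁ᵀ * B₁) with hS_def
    have hSeq : D - B₁ᴴ * A₁⁻¹ * B₁ = S := by
      rw [hBH, hA₁inv, hS_def, Matrix.mul_smul, Matrix.mul_one, Matrix.smul_mul]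
    have hD_symm : Dᵀ = D := by
      ext i j
      exact hsymm.apply i.succ j.succ
    have hSsymm : S.IsSymm := by
      rw [Matrix.IsSymm, hS_def, transpose_sub, transpose_smul, transpose_mul,
        transpose_transpose, hD_symm]
    have hS1 : S.IsHermitian := by
      rw [Matrix.IsHermitian]
      ext i j
      simp only [conjTranspose_apply, star_trivial]
      exact congrFun (congrFun hSsymm i) j
    have hSpd : S.PosDef := by
      refine PosDef.of_dotProduct_mulVec_pos hS1 fun x hx => ?_
      have hz : (-(((A₁⁻¹ * B₁) *ᵥ x)) ⊕ᵥ x) ≠ 0 := fun h =>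
        hx (funext fun i => congrFun h (Sum.inr i))
      have h0 := hA'pd.dotProduct_mulVec_pos hz
      rw [hblocks, dotProduct_mulVec,
        schur_complement_eq₁₁ B₁ D _ _ hA₁herm, neg_add_cancel, star_zero,
        zero_vecMul, zero_dotProduct, zero_add, hSeq] at h0
      rw [dotProduct_mulVec]
      exact h0
    have hSoff : ∀ i j : Fin k, i ≠ j → S i j ≤ 0 := by
      intro i j hij
      have h1 : S i j = A i.succ j.succ - a⁻¹ * (A 0 i.succ * A 0 j.succ) := by
        simp [hS_def, Matrix.sub_apply, Matrix.smul_apply, Matrix.mul_apply,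
          hB₁_def, hD_def, Fin.sum_univ_one]
      rw [h1]
      have h2 : A i.succ j.succ ≤ 0 := hoff _ _ (by simpa using hij)
      have hbi : A 0 i.succ ≤ 0 := hoff _ _ (Fin.succ_ne_zero i).symm
      have hbj : A 0 j.succ ≤ 0 := hoff _ _ (Fin.succ_ne_zero j).symm
      have h3 : 0 ≤ A 0 i.succ * A 0 j.succ := by nlinarith
      have h4 : 0 ≤ a⁻¹ * (A 0 i.succ * A 0 j.succ) :=
        mul_nonneg (inv_nonneg.2 ha.le) h3
      linarith
    have hSdet : IsUnit S.det := (Matrix.isUnit_iff_isUnit_det S).mp hSpd.isUnit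
    have hSS : S * S⁻¹ = 1 := Matrix.mul_nonsing_inv S hSdet
    obtain ⟨T, hT1, hT2, hT3⟩ := ih S hSsymm hSpd hSoff
    have hTT : T * Tᵀ = S⁻¹ := hT3.symm
    -- the factor
    set N : Matrix (Fin 1) (Fin k) ℝ := B₁ * T with hN_def
    set C : Matrix (Fin 1) (Fin k) ℝ := -(a⁻¹ • N) with hC_def
    set P : Matrix (Fin 1) (Fin 1) ℝ := (Real.sqrt a)⁻¹ • 1 with hP_def
    set B' : Matrix (Fin 1 ⊕ Fin k) (Fin 1 ⊕ Fin k) ℝ := Matrix.fromBlocks P C 0 T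
      with hB'_def
    refine ⟨B'.submatrix e.symm e.symm, ?_, ?_, ?_⟩
    · -- upper triangular
      have htri : B'.BlockTriangular ⇑e := by
        rintro (i | i) (j | j) hij
        · exact absurd (Subsingleton.elim i j ▸ hij) (lt_irrefl _)
        · rw [Subsingleton.elim i 0, he1] at hij
          exact absurd hij (Fin.not_lt_zero _)
        · simp [hB'_def, Matrix.fromBlocks]
        · rw [he2, he2, Fin.succ_lt_succ_iff] at hij
          exact hT1 hij
      have h := htri.submatrix (f := ⇑e.symm)
      intro i j hij
      exact h (by simpa using hij)
    · -- nonnegative entries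
      intro i j
      rw [Matrix.submatrix_apply]
      rcases hu : e.symm i with u | u <;> rcases hv : e.symm j with v | v
      · rw [hB'_def]
        by_cases h : u = v <;>
          simp [h, hP_def, Matrix.smul_apply, Matrix.one_apply,
            inv_nonneg.2 (Real.sqrt_nonneg a)]
      · rw [hB'_def]
        have hN0 : N u v ≤ 0 := by
          rw [hN_def, Matrix.mul_apply]
          refine Finset.sum_nonpos fun m _ => ?_
          have hb : B₁ u m ≤ 0 := hoff _ _ (Fin.succ_ne_zero m).symm
          exact mul_nonpos_iff.2 (Or.inr ⟨hb, hT2 m v⟩)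
        have hh := mul_le_mul_of_nonneg_left hN0 (inv_nonneg.2 ha.le)
        simp only [Matrix.fromBlocks_apply₁₂, hC_def, Matrix.neg_apply,
          Matrix.smul_apply, smul_eq_mul, neg_nonneg]
        linarith
      · simp [hB'_def]
      · rw [hB'_def]
        simpa using hT2 u v
    · -- the inverse identity
      apply Matrix.inv_eq_right_inv
      have hB'T : B'ᵀ = Matrix.fromBlocks P 0 Cᵀ Tᵀ := by
        rw [hB'_def, Matrix.fromBlocks_transpose, hP_def, transpose_smul,
          transpose_one, transpose_zero]
      have hPP : P * P = a⁻¹ • (1 : Matrix (Fin 1) (Fin 1) ℝ) := by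
        rw [hP_def, smul_mul_smul_comm, mul_one, ← mul_inv,
          Real.mul_self_sqrt ha.le]
      have hmul : B' * B'ᵀ =
          Matrix.fromBlocks (a⁻¹ • 1 + C * Cᵀ) (C * Tᵀ) (T * Cᵀ) (T * Tᵀ) := by
        rw [hB'_def, hB'T, Matrix.fromBlocks_multiply, hPP]
        congr 1 <;> simp
      have hTX : T * (Tᵀ * B₁ᵀ) = S⁻¹ * B₁ᵀ := by rw [← Matrix.mul_assoc, hTT]
      have h11 : A₁ * (a⁻¹ • 1 + C * Cᵀ) + B₁ * (T * Cᵀ) = 1 := by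
        rw [hA₁_def, hC_def, hN_def]
        simp only [Matrix.mul_add, Matrix.neg_mul, Matrix.mul_neg, neg_neg,
          Matrix.smul_mul, Matrix.mul_smul, Matrix.one_mul, Matrix.mul_one,
          smul_smul, smul_neg, transpose_neg, transpose_smul, transpose_mul,
          Matrix.mul_assoc]
        rw [inv_mul_cancel₀ ha', one_smul, mul_assoc, inv_mul_cancel₀ ha', mul_one]
        abel
      have h12 : A₁ * (C * Tᵀ) + B₁ * (T * Tᵀ) = 0 := by
        rw [hA₁_def, hC_def, hN_def]
        simp only [Matrix.neg_mul, Matrix.mul_neg, Matrix.smul_mul, Matrix.mul_smul,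
          Matrix.one_mul, smul_smul, Matrix.mul_assoc]
        rw [inv_mul_cancel₀ ha', one_smul]
        exact neg_add_cancel _
      have h21 : B₁ᴴ * (a⁻¹ • 1 + C * Cᵀ) + D * (T * Cᵀ) = 0 := by
        have hkey : D * (S⁻¹ * B₁ᵀ) =
            B₁ᵀ + a⁻¹ • (B₁ᵀ * (B₁ * (S⁻¹ * B₁ᵀ))) := by
          have h5 : (D - a⁻¹ • (B₁ᵀ * B₁)) * (S⁻¹ * B₁ᵀ) = B₁ᵀ := by
            rw [← hS_def, ← Matrix.mul_assoc, hSS, Matrix.one_mul]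
          rw [Matrix.sub_mul, Matrix.smul_mul] at h5
          simp only [Matrix.mul_assoc] at h5
          exact eq_add_of_sub_eq h5
        rw [hBH, hC_def, hN_def]
        simp only [Matrix.mul_add, Matrix.neg_mul, Matrix.mul_neg, neg_neg,
          Matrix.smul_mul, Matrix.mul_smul, Matrix.one_mul, Matrix.mul_one,
          smul_smul, transpose_neg, transpose_smul, transpose_mul,
          Matrix.mul_assoc, hTX]
        rw [hkey, smul_add, smul_smul]
        module
      have h22 : B₁ᴴ * (C * Tᵀ) + D * (T * Tᵀ) = 1 := by
        rw [hBH, hC_def, hN_def]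
        simp only [Matrix.neg_mul, Matrix.mul_neg, Matrix.smul_mul, Matrix.mul_smul,
          Matrix.mul_assoc, hTT]
        calc -(a⁻¹ • (B₁ᵀ * (B₁ * S⁻¹))) + D * S⁻¹
            = (D - a⁻¹ • (B₁ᵀ * B₁)) * S⁻¹ := by
              rw [Matrix.sub_mul, Matrix.smul_mul, Matrix.mul_assoc]
              abel
          _ = 1 := by rw [← hS_def, hSS]
      have hmain : Matrix.fromBlocks A₁ B₁ B₁ᴴ D * (B' * B'ᵀ) = 1 := by
        rw [hmul, Matrix.fromBlocks_multiply, h11, h12, h21, h22,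
          Matrix.fromBlocks_one]
      have hA2 : A = (Matrix.fromBlocks A₁ B₁ B₁ᴴ D).submatrix e.symm e.symm := by
        rw [← hblocks, Matrix.submatrix_submatrix]
        simp [Equiv.self_comp_symm]
      rw [Matrix.transpose_submatrix, Matrix.submatrix_mul_equiv]
      conv_lhs => rw [hA2]
      rw [Matrix.submatrix_mul_equiv, hmain, Matrix.submatrix_one_equiv]

/-- A real symmetric positive definite matrix with nonpositive
off-diagonal entries can be written as `A = (Bᵀ)⁻¹ * B⁻¹` for an upper
triangular matrix `B` with nonnegative entries; in particular `A⁻¹ = B * Bᵀ`. -/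
theorem exists_upper_triangular_nonneg_factorization {r : ℕ}
    (A : Matrix (Fin r) (Fin r) ℝ)
    (hsymm : A.IsSymm) (hpd : A.PosDef)
    (hoff : ∀ i j : Fin r, i ≠ j → A i j ≤ 0) :
    ∃ B : Matrix (Fin r) (Fin r) ℝ,
      B.BlockTriangular id ∧ (∀ i j, 0 ≤ B i j) ∧
      A = (Bᵀ)⁻¹ * B⁻¹ ∧ A⁻¹ = B * Bᵀ := by
  obtain ⟨B, hB1, hB2, hB3⟩ := aux_fact r A hsymm hpd hoff
  refine ⟨B, hB1, hB2, ?_, hB3⟩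
  have hdet : IsUnit A.det := (Matrix.isUnit_iff_isUnit_det A).mp hpd.isUnit
  calc A = A⁻¹⁻¹ := (Matrix.nonsing_inv_nonsing_inv A hdet).symm
    _ = (B * Bᵀ)⁻¹ := by rw [hB3]
    _ = (Bᵀ)⁻¹ * B⁻¹ := Matrix.mul_inv_rev B Bᵀ
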